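/- Every max-min SIR-balanced power vector p̄ ∈ P satisfies max_{1≤n≤N} g_n(p̄) = 1; that is, Cp̄ ≤ p̂ holds entrywise and (Cp̄)_n = P_n for at least one index n (at least one power constraint is active at the optimum). -/

import Mathlib

open Matrix

/-- A nonnegative square matrix is irreducible. -/
def MatIrred {m : Type*} [Fintype m] (M : Matrix m m ℝ) : Prop :=
  ∀ S : Set m, S.Nonempty → S ≠ Set.univ → ∃ i ∈ S, ∃ j ∉ S, 0 < M i j

/-- Spectral radius of a real square matrix (largest modulus of a complex eigenvalue). -/
noncomputable def specRad {m : Type*} [Fintype m] [DecidableEq m] (M : Matrix m m ℝ) : ℝ :=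
  sSup ((fun w : ℂ => ‖w‖) '' spectrum ℂ (M.map fun x => (x : ℂ)))

/-- SIR of link `k` under power vector `p`. -/
noncomputable def SIR {K : ℕ} (V : Matrix (Fin K) (Fin K) ℝ) (z : Fin K → ℝ)
    (p : Fin K → ℝ) (k : Fin K) : ℝ :=
  p k / (V.mulVec p k + z k)

/-- The polytope of admissible power vectors. -/
def Pset {K N : ℕ} (C : Matrix (Fin N) (Fin K) ℝ) (phat : Fin N → ℝ) :
    Set (Fin K → ℝ) :=
  {p | (∀ k, 0 ≤ p k) ∧ ∀ n, C.mulVec p n ≤ phat n}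

/-- Admissible power vectors with all entries positive. -/
def Pplus {K N : ℕ} (C : Matrix (Fin N) (Fin K) ℝ) (phat : Fin N → ℝ) :
    Set (Fin K → ℝ) :=
  {p ∈ Pset C phat | ∀ k, 0 < p k}

/-- Normalized power-constraint functions `gₙ(p) = cₙᵀ p / Pₙ`. -/
noncomputable def gcon {K N : ℕ} (C : Matrix (Fin N) (Fin K) ℝ) (phat : Fin N → ℝ)
    (n : Fin N) (p : Fin K → ℝ) : ℝ :=
  C.mulVec p n / phat n

/-- The matrices `B⁽ⁿ⁾ = Γ (V + (1/Pₙ) z cₙᵀ)`. -/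
noncomputable def Bmat {K N : ℕ} (V : Matrix (Fin K) (Fin K) ℝ) (z : Fin K → ℝ)
    (γ : Fin K → ℝ) (C : Matrix (Fin N) (Fin K) ℝ) (phat : Fin N → ℝ) (n : Fin N) :
    Matrix (Fin K) (Fin K) ℝ :=
  Matrix.diagonal γ * (V + (phat n)⁻¹ • Matrix.vecMulVec z (C n))

/-- The extended `(K+1)×(K+1)` matrices `A⁽ⁿ⁾`. -/
noncomputable def Amat {K N : ℕ} (V : Matrix (Fin K) (Fin K) ℝ) (z : Fin K → ℝ)
    (γ : Fin K → ℝ) (C : Matrix (Fin N) (Fin K) ℝ) (phat : Fin N → ℝ) (n : Fin N) :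
    Matrix (Fin (K+1)) (Fin (K+1)) ℝ :=
  Matrix.of fun i j =>
    if hi : (i : ℕ) < K then
      if hj : (j : ℕ) < K then γ ⟨i, hi⟩ * V ⟨i, hi⟩ ⟨j, hj⟩
      else γ ⟨i, hi⟩ * z ⟨i, hi⟩
    else
      if hj : (j : ℕ) < K then (phat n)⁻¹ * ∑ k, C n k * (γ k * V k ⟨j, hj⟩)
      else (phat n)⁻¹ * ∑ k, C n k * (γ k * z k)

/-- `pbar` is a max-min SIR-balanced power vector: it maximizes
`p ↦ min_k SIR_k(p)/γ_k` over the set `P`. -/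
def MaxMinBalanced {K N : ℕ} (V : Matrix (Fin K) (Fin K) ℝ) (z : Fin K → ℝ)
    (γ : Fin K → ℝ) (C : Matrix (Fin N) (Fin K) ℝ) (phat : Fin N → ℝ)
    (pbar : Fin K → ℝ) : Prop :=
  pbar ∈ Pset C phat ∧
    ∀ p ∈ Pset C phat, (⨅ k, SIR V z p k / γ k) ≤ ⨅ k, SIR V z pbar k / γ k

/-- The set `N₀(p)` of active power constraints. -/
def activeSet {K N : ℕ} (C : Matrix (Fin N) (Fin K) ℝ) (phat : Fin N → ℝ)
    (p : Fin K → ℝ) : Set (Fin N) :=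
  {n | gcon C phat n p = 1 ∧ ∀ m, gcon C phat m p ≤ gcon C phat n p}

/-- The (relatively open) probability simplex `Π⁺_K`. -/
def PosSimplex (K : ℕ) : Set (Fin K → ℝ) :=
  {w | (∀ k, 0 < w k) ∧ ∑ k, w k = 1}

/-- The feasible QoS region `F`. -/
def QoSRegion {K N : ℕ} (V : Matrix (Fin K) (Fin K) ℝ) (z : Fin K → ℝ)
    (γ : Fin K → ℝ) (C : Matrix (Fin N) (Fin K) ℝ) (phat : Fin N → ℝ)
    (φ : ℝ → ℝ) : Set (Fin K → ℝ) :=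
  {q | ∃ p ∈ Pplus C phat, ∀ k, q k = φ (SIR V z p k / γ k)}

open Topology

/-! If no power constraint were active at `pbar`, every constraint would have slack, so
`t • pbar` stays admissible for some `t > 1`. Since
`SIR_k (t p) = p_k / ((V p)_k + z_k / t)`, scaling by `t` strictly raises the SIR of every
link with positive power, contradicting optimality. And a max-min balanced vector gives every
link positive power: switching a link off makes the balanced SIR `0`, which a small positive
multiple of `1` beats. -/

theorem ciInf_lt_ciInf_of_forall_lt {ι α : Type*} [Finite ι] [Nonempty ι]
    [ConditionallyCompleteLinearOrder α] {f g : ι → α} (h : ∀ i, f i < g i) :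
    ⨅ i, f i < ⨅ i, g i := by
  obtain ⟨i, hi⟩ := exists_eq_ciInf_of_finite (f := g)
  calc ⨅ i, f i ≤ f i := ciInf_le (Set.finite_range f).bddBelow i
    _ < g i := h i
    _ = ⨅ i, g i := hi

section SIR

variable {K N : ℕ} {V : Matrix (Fin K) (Fin K) ℝ} {z p : Fin K → ℝ}

theorem mulVec_nonneg_of_nonneg (hV : ∀ i j, 0 ≤ V i j) (hp : ∀ k, 0 ≤ p k) (k : Fin K) :
    0 ≤ (V *ᵥ p) k :=
  dotProduct_nonneg_of_nonneg (hV k) hp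

theorem SIR_pos {k : Fin K} (hVp : 0 ≤ (V *ᵥ p) k) (hz : 0 < z k) (hp : 0 < p k) :
    0 < SIR V z p k :=
  div_pos hp (by linarith)

theorem SIR_lt_SIR_smul {k : Fin K} {t : ℝ} (hVp : 0 ≤ (V *ᵥ p) k) (hz : 0 < z k)
    (hp : 0 < p k) (ht : 1 < t) : SIR V z p k < SIR V z (t • p) k := by
  have hden : 0 < t * (V *ᵥ p) k + z k := by nlinarith
  simp only [SIR, Matrix.mulVec_smul, Pi.smul_apply, smul_eq_mul]
  rw [div_lt_div_iff₀ (by linarith) hden]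
  nlinarith [mul_pos (mul_pos hp hz) (sub_pos.mpr ht)]

theorem exists_gt_smul_mem_Pset {C : Matrix (Fin N) (Fin K) ℝ} {phat : Fin N → ℝ} {s : ℝ}
    (hs : 0 ≤ s) (hp : ∀ k, 0 ≤ p k) (hslack : ∀ n, s * (C *ᵥ p) n < phat n) :
    ∃ t, s < t ∧ t • p ∈ Pset C phat := by
  have hfeas : ∀ᶠ t in 𝓝 s, ∀ n, t * (C *ᵥ p) n < phat n :=
    Filter.eventually_all.2 fun n =>
      (continuous_id.mul continuous_const).continuousAt.eventually_lt continuousAt_const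
        (hslack n)
  obtain ⟨t, ht, hst⟩ := (hfeas.and_frequently (frequently_gt_nhds s)).exists
  refine ⟨t, hst, fun k => ?_, fun n => ?_⟩
  · exact mul_nonneg (by linarith) (hp k)
  · simpa [Matrix.mulVec_smul] using (ht n).le

end SIR

section MaxMinBalanced

variable {K N : ℕ} [Nonempty (Fin K)] {V : Matrix (Fin K) (Fin K) ℝ} {z γ : Fin K → ℝ}
  {C : Matrix (Fin N) (Fin K) ℝ} {phat : Fin N → ℝ} {pbar : Fin K → ℝ}

theorem MaxMinBalanced.pos (hV : ∀ i j, 0 ≤ V i j) (hz : ∀ k, 0 < z k) (hγ : ∀ k, 0 < γ k)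
    (hphat : ∀ n, 0 < phat n) (hbal : MaxMinBalanced V z γ C phat pbar) (k : Fin K) :
    0 < pbar k := by
  by_contra! hk
  have hk0 : pbar k = 0 := le_antisymm hk (hbal.1.1 k)
  obtain ⟨t, ht, htP⟩ := exists_gt_smul_mem_Pset (C := C) (p := 1) le_rfl
    (fun _ => zero_le_one) fun n => by simpa using hphat n
  have htpos : ∀ i, 0 < (t • (1 : Fin K → ℝ)) i := fun _ => by simpa using ht
  have hbal_le_zero : ⨅ i, SIR V z pbar i / γ i ≤ 0 := by
    simpa [SIR, hk0] using ciInf_le (Set.finite_range fun i => SIR V z pbar i / γ i).bddBelow k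
  have hzero_lt : 0 < ⨅ i, SIR V z (t • 1) i / γ i := by
    rw [← ciInf_const (a := (0 : ℝ)) (ι := Fin K)]
    exact ciInf_lt_ciInf_of_forall_lt fun i => div_pos
      (SIR_pos (mulVec_nonneg_of_nonneg hV (fun j => (htpos j).le) i) (hz i) (htpos i)) (hγ i)
  exact (hbal.2 _ htP).not_gt (hbal_le_zero.trans_lt hzero_lt)

end MaxMinBalanced

theorem stmt2_general    {K N : ℕ} (hK : 2 ≤ K)
    (V : Matrix (Fin K) (Fin K) ℝ) (z γ : Fin K → ℝ)
    (C : Matrix (Fin N) (Fin K) ℝ) (phat : Fin N → ℝ)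
    (hV : ∀ i j, 0 ≤ V i j)
    (hz : ∀ k, 0 < z k) (hγ : ∀ k, 0 < γ k)
    (hphat : ∀ n, 0 < phat n)
    (pbar : Fin K → ℝ) (hbal : MaxMinBalanced V z γ C phat pbar) :
    (∀ n, C.mulVec pbar n ≤ phat n) ∧ ∃ n, C.mulVec pbar n = phat n := by
  have : Nonempty (Fin K) := ⟨⟨0, by omega⟩⟩
  have hpos := hbal.pos hV hz hγ hphat
  refine ⟨hbal.1.2, ?_⟩
  by_contra! hslack
  obtain ⟨t, ht, htP⟩ := exists_gt_smul_mem_Pset zero_le_one hbal.1.1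
    fun n => by simpa using (hbal.1.2 n).lt_of_ne (hslack n)
  have hbetter : ⨅ k, SIR V z pbar k / γ k < ⨅ k, SIR V z (t • pbar) k / γ k :=
    ciInf_lt_ciInf_of_forall_lt fun k => div_lt_div_of_pos_right
      (SIR_lt_SIR_smul (mulVec_nonneg_of_nonneg hV hbal.1.1 k) (hz k) (hpos k) ht) (hγ k)
  exact (hbal.2 _ htP).not_gt hbetter

theorem stmt2    {K N : ℕ} (hK : 2 ≤ K) (hN : 1 ≤ N)
    (V : Matrix (Fin K) (Fin K) ℝ) (z γ : Fin K → ℝ)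
    (C : Matrix (Fin N) (Fin K) ℝ) (phat : Fin N → ℝ)
    (hV : ∀ i j, 0 ≤ V i j) (hVdiag : ∀ i, V i i = 0)
    (hz : ∀ k, 0 < z k) (hγ : ∀ k, 0 < γ k)
    (hC : ∀ n k, C n k = 0 ∨ C n k = 1) (hCcol : ∀ k, ∃ n, C n k = 1)
    (hphat : ∀ n, 0 < phat n)
    (pbar : Fin K → ℝ) (hbal : MaxMinBalanced V z γ C phat pbar) :
    (∀ n, C.mulVec pbar n ≤ phat n) ∧ ∃ n, C.mulVec pbar n = phat n :=
  stmt2_general hK V z γ C phat hV hz hγ hphat pbar hbal
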